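/- arXiv:1003.2033 — 2 statements merged into one kernel-verified Lean document; each statement's English description precedes it below -/
import Mathlib

section
/- Let z and t_{i_1}, ..., t_{i_N}, t_j be pairwise distinct complex numbers, with j not occurring among the i_k. Write the list I = (i_N,...,i_1) as I = I'' i I' with a distinguished entry i. Define ζ_L(z) as the product (∏ over consecutive pairs (c_k, c_{k-1}) of L of 1/(c_k - c_{k-1})) · 1/(first entry from the right of L minus z), ζ_∅=1, and for a nonempty list L = (c_N,...,c_1) define ω_L = ∏_{k=2}^{N} 1/(t_{c_k} - t_{c_{k-1}}), with ω of a singleton equal to 1. Then ((z - t_j)/(t_i - t_j)) ζ_I(z) = ζ_I(z) − ∑_{I' = I_2 I_1} (-1)^{|I_2|} ζ_{I_1}(z) · ω_{I'' i} · ω_{I_2* i j}, where the sum is over all decompositions of the final segment I' into concatenation I_2 I_1, and I_2* denotes reversal. -/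
/-!
Since `ζ_{I''iI'} = ω_{I''i} ζ_{iI'}` and `ω_{I₂* i j} = ω_{I₂* i} / (t_i - t_j)`, the identity
reduces to `(z - t) ζ_{tL}(z) = -∑_{L = L₂L₁} (-1)^{|L₂|} ζ_{L₁}(z) ω_{L₂* t}`. For `L = aL'`
the splitting with `L₂` empty contributes `ζ_{aL'}(z)`, and the others, whose `L₂` ends in `a`,
add up to `-(a - t)⁻¹` times the same sum for `a` and `L'`; so induction on `L` closes it with
`1 + (z - a)/(a - t) = (z - t)/(a - t)`.
-/

/-- `zeta [c_N,...,c_1] z = (∏_{k=2}^N 1/(c_k - c_{k-1})) · 1/(c_1 - z)`, `zeta [] z = 1`. -/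
noncomputable def zeta : List ℂ → ℂ → ℂ
  | [], _ => 1
  | [a], z => (a - z)⁻¹
  | a :: b :: rest, z => (a - b)⁻¹ * zeta (b :: rest) z

/-- `omega [c_N,...,c_1] = ∏_{k=2}^N 1/(c_k - c_{k-1})`, with `omega` of a
singleton equal to `1` and `omega [] = 0`. -/
noncomputable def omega : List ℂ → ℂ
  | [] => 0
  | [_] => 1
  | a :: b :: rest => (a - b)⁻¹ * omega (b :: rest)

open Finset

theorem omega_append_cons :
    ∀ (A : List ℂ) (b : ℂ) (C : List ℂ), omega (A ++ b :: C) = omega (A ++ [b]) * omega (b :: C)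
  | [], b, C => by simp [omega]
  | [x], b, C => by cases C <;> simp [omega]
  | x :: y :: A, b, C => by
    simp only [List.cons_append, omega]
    rw [← List.cons_append, omega_append_cons (y :: A) b C, List.cons_append, mul_assoc]

theorem zeta_append_cons (z : ℂ) :
    ∀ (A : List ℂ) (b : ℂ) (B : List ℂ), zeta (A ++ b :: B) z = omega (A ++ [b]) * zeta (b :: B) z
  | [], b, B => by simp [omega]
  | [x], b, B => by simp [zeta, omega]
  | x :: y :: A, b, B => by
    simp only [List.cons_append, zeta, omega]
    rw [← List.cons_append, zeta_append_cons z (y :: A) b B, List.cons_append, mul_assoc]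

theorem omega_append_pair (A : List ℂ) (a b : ℂ) :
    omega (A ++ [a, b]) = omega (A ++ [a]) * (a - b)⁻¹ := by
  rw [omega_append_cons]; simp [omega]

/-- The alternating sum over splittings `L = L₂ L₁` of `ζ_{L₁}(z) ω_{L₂* t}`. -/
noncomputable def shuffleSum (t z : ℂ) (L : List ℂ) : ℂ :=
  ∑ k ∈ range (L.length + 1), (-1 : ℂ) ^ k * zeta (L.drop k) z * omega ((L.take k).reverse ++ [t])

theorem shuffleSum_cons (t z a : ℂ) (L : List ℂ) :
    shuffleSum t z (a :: L) = zeta (a :: L) z - (a - t)⁻¹ * shuffleSum a z L := by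
  have hterm (k : ℕ) : (-1 : ℂ) ^ (k + 1) * zeta ((a :: L).drop (k + 1)) z *
      omega (((a :: L).take (k + 1)).reverse ++ [t]) =
      -((a - t)⁻¹ * ((-1) ^ k * zeta (L.drop k) z * omega ((L.take k).reverse ++ [a]))) := by
    rw [List.drop_succ_cons, List.take_succ_cons, List.reverse_cons, List.append_assoc,
      List.singleton_append, omega_append_pair]
    ring
  rw [shuffleSum, List.length_cons, sum_range_succ']
  simp only [hterm, sum_neg_distrib, shuffleSum, mul_sum]
  simp [omega, sub_eq_neg_add]

theorem sub_mul_zeta_cons (z t : ℂ) (L : List ℂ) (h : (z :: t :: L).Pairwise (· ≠ ·)) :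
    (z - t) * zeta (t :: L) z = -shuffleSum t z L := by
  induction L generalizing t with
  | nil =>
    have htz : t - z ≠ 0 := sub_ne_zero.mpr (by simpa [eq_comm] using h)
    simp [shuffleSum, zeta, omega]
    field_simp
    ring
  | cons a L ih =>
    have hta : t ≠ a := (List.pairwise_cons.mp (List.pairwise_cons.mp h).2).1 a (by simp)
    have hta' : t - a ≠ 0 := sub_ne_zero.mpr hta
    have hat : a - t ≠ 0 := sub_ne_zero.mpr hta.symm
    have ih' := ih a (h.sublist (by simp))
    rw [shuffleSum_cons, ← neg_neg (shuffleSum a z L), ← ih', zeta]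
    field_simp
    ring

/-- Second mixed shuffle identity: with `I = I'' i I'` (lists read with head = leftmost),
`tj` an extra point, all of `z, tj` and the entries of `I` pairwise distinct,
`((z - t_j)/(t_i - t_j)) ζ_I(z) = ζ_I(z) − ∑_{I'=I₂I₁} (-1)^{|I₂|} ζ_{I₁}(z) ω_{I''i} ω_{I₂* i j}`. -/
theorem mixed_shuffle₂ (z tj ti : ℂ) (I'' I' : List ℂ)
    (h : (z :: tj :: (I'' ++ ti :: I')).Pairwise (· ≠ ·)) :
    ((z - tj) / (ti - tj)) * zeta (I'' ++ ti :: I') z =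
      zeta (I'' ++ ti :: I') z -
        ∑ k ∈ Finset.range (I'.length + 1),
          (-1 : ℂ) ^ k * zeta (I'.drop k) z * omega (I'' ++ [ti]) *
            omega ((I'.take k).reverse ++ [ti, tj]) := by
  have htij : ti - tj ≠ 0 :=
    sub_ne_zero.mpr ((List.pairwise_cons.mp (List.pairwise_cons.mp h).2).1 ti (by simp)).symm
  have hsum : ∑ k ∈ range (I'.length + 1), (-1 : ℂ) ^ k * zeta (I'.drop k) z *
      omega (I'' ++ [ti]) * omega ((I'.take k).reverse ++ [ti, tj]) =
      omega (I'' ++ [ti]) * (ti - tj)⁻¹ * shuffleSum ti z I' := by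
    rw [shuffleSum, mul_sum]
    exact sum_congr rfl fun k _ => by rw [omega_append_pair]; ring
  have hkey := sub_mul_zeta_cons z ti I' (h.sublist (by simp))
  rw [hsum, ← neg_neg (shuffleSum ti z I'), ← hkey, zeta_append_cons]
  field_simp
  ring
end

section
/- Let z and t_{j_1}, ..., t_{j_M} be pairwise distinct complex numbers and let x be an additional index. For a list L of distinct complex points define ζ_L(s) where one entry of the list is allowed to be a variable; specifically, view ζ as a rational function of the coordinate t_x = s. Then: (1) if the list is I = (x, j_M, ..., j_1) (x leftmost), then lim_{s→∞} s · ζ_{(s, t_{j_M}, ..., t_{j_1})}(z) = ζ_{(t_{j_M},...,t_{j_1})}(z); (2) if x occurs in the list but not in the leftmost position, then lim_{s→∞} s · ζ_I(z) = 0. Here ζ_{(c_N,...,c_1)}(z) = ∏_{k=2}^N 1/(c_k − c_{k-1}) · 1/(c_1 − z) and the limit is along the filter of complex numbers of large modulus. -/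
/-!
Write `ζ_{(a, L)} = (a - c)⁻¹ · ζ_L`, where `c` is the head of `L` (or `z` when `L` is empty).
If the variable `s` is the leftmost entry, `s · ζ_{(s, L)} = s (s - c)⁻¹ · ζ_L` and `s (s - c)⁻¹ → 1`.
If `s` sits after some entry `p`, peel off the constant factors in front of `p` and use
`s · ζ_{(p, s, Q)} = (p - s)⁻¹ · (s · ζ_{(s, Q)})`: the first factor tends to `0`, the second
to `ζ_Q` by the first case.
-/

open Filter

open Bornology Topology

lemma zeta_cons (a : ℂ) (L : List ℂ) (z : ℂ) :
    zeta (a :: L) z = (a - L.headD z)⁻¹ * zeta L z := by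
  cases L <;> simp [zeta]

section NormedField

variable {𝕜 : Type*} [NormedField 𝕜]

lemma tendsto_inv_sub_const_cobounded (a : 𝕜) :
    Tendsto (fun s : 𝕜 => (s - a)⁻¹) (cobounded 𝕜) (𝓝 0) :=
  tendsto_inv₀_cobounded.comp (tendsto_sub_const_cobounded a)

lemma tendsto_inv_const_sub_cobounded (a : 𝕜) :
    Tendsto (fun s : 𝕜 => (a - s)⁻¹) (cobounded 𝕜) (𝓝 0) :=
  tendsto_inv₀_cobounded.comp (tendsto_const_sub_cobounded a)

lemma tendsto_mul_inv_sub_const_cobounded (a : 𝕜) :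
    Tendsto (fun s : 𝕜 => s * (s - a)⁻¹) (cobounded 𝕜) (𝓝 1) := by
  have h : Tendsto (fun s : 𝕜 => 1 + a * (s - a)⁻¹) (cobounded 𝕜) (𝓝 1) := by
    simpa using tendsto_const_nhds.add ((tendsto_inv_sub_const_cobounded a).const_mul a)
  refine h.congr' ?_
  filter_upwards [eventually_ne_cobounded a] with s hs
  have hs' : s - a ≠ 0 := sub_ne_zero.mpr hs
  field_simp
  ring

end NormedField

lemma tendsto_mul_zeta_cons_self (z : ℂ) (L : List ℂ) :
    Tendsto (fun s : ℂ => s * zeta (s :: L) z) (cobounded ℂ) (𝓝 (zeta L z)) := by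
  simpa [zeta_cons, mul_assoc] using
    (tendsto_mul_inv_sub_const_cobounded (L.headD z)).mul_const (zeta L z)

lemma tendsto_mul_zeta_cons_append_cons (z p : ℂ) (P Q : List ℂ) :
    Tendsto (fun s : ℂ => s * zeta (p :: (P ++ s :: Q)) z) (cobounded ℂ) (𝓝 0) := by
  induction P generalizing p with
  | nil =>
    have h := (tendsto_inv_const_sub_cobounded p).mul (tendsto_mul_zeta_cons_self z Q)
    rw [zero_mul] at h
    refine h.congr fun s => ?_
    rw [List.nil_append, zeta_cons p, List.headD_cons]
    ring
  | cons p' P ih =>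
    have h := (ih p').const_mul (p - p')⁻¹
    rw [mul_zero] at h
    refine h.congr fun s => ?_
    rw [List.cons_append, zeta_cons p, List.headD_cons]
    ring

theorem residue_at_infty_general (z : ℂ) (L : List ℂ) :
    Tendsto (fun s : ℂ => s * zeta (s :: L) z) (Bornology.cobounded ℂ)
        (nhds (zeta L z)) ∧
      ∀ P Q : List ℂ, P ≠ [] → P ++ Q = L →
        Tendsto (fun s : ℂ => s * zeta (P ++ s :: Q) z) (Bornology.cobounded ℂ)
          (nhds 0) := by
  refine ⟨tendsto_mul_zeta_cons_self z L, fun P Q hP _ => ?_⟩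
  obtain ⟨p, P, rfl⟩ := List.exists_cons_of_ne_nil hP
  exact tendsto_mul_zeta_cons_append_cons z p P Q

/-- Action of the residue-at-infinity operator `E_x = −res_{(t_x=∞)}` on `ζ_I`:
(1) if the variable `s` is the leftmost entry, `lim_{s→∞} s·ζ_{(s,t_{j_M},...,t_{j_1})}(z)
    = ζ_{(t_{j_M},...,t_{j_1})}(z)`;
(2) if it occurs elsewhere, the limit is `0`.
The limit is along the filter of complex numbers of large modulus. -/
theorem residue_at_infty (z : ℂ) (L : List ℂ) (h : (z :: L).Pairwise (· ≠ ·)) :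
    Tendsto (fun s : ℂ => s * zeta (s :: L) z) (Bornology.cobounded ℂ)
        (nhds (zeta L z)) ∧
      ∀ P Q : List ℂ, P ≠ [] → P ++ Q = L →
        Tendsto (fun s : ℂ => s * zeta (P ++ s :: Q) z) (Bornology.cobounded ℂ)
          (nhds 0) :=
  residue_at_infty_general z L
end
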